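/- arXiv:2010.00261 — 2 statements merged into one kernel-verified Lean document; each statement's English description precedes it below -/
import Mathlib

section
/- Let D ≥ 1 and let x, y ∈ ℝ^D satisfy x_i ≥ 0 and y_i ≥ 0 for all 1 ≤ i ≤ D, together with ∑_{i=1}^D x_i = 1 and ∑_{i=1}^D y_i = 1. Then the chi-square similarity ρ_{χ²}(x, y) := ∑_{i=1}^D 2·x_i·y_i/(x_i + y_i) is greater than or equal to ρ_1(x, y) := (∑_{i=1}^D √(x_i·y_i))². -/
/-!
The geometric mean `√(ab)` is the geometric mean of the harmonic mean `2ab/(a+b)` and the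
arithmetic mean `(a+b)/2`. Cauchy–Schwarz therefore bounds `(∑ √(xᵢyᵢ))²` by the product of
`∑ 2xᵢyᵢ/(xᵢ+yᵢ)` and `∑ (xᵢ+yᵢ)/2`, and the second factor is `1` for probability vectors.
-/

open Finset

lemma sq_sqrt_mul_eq_harmonicMean_mul_arithMean {a b : ℝ} (ha : 0 ≤ a) (hb : 0 ≤ b) :
    √(a * b) ^ 2 = 2 * a * b / (a + b) * ((a + b) / 2) := by
  rcases (add_nonneg ha hb).eq_or_lt with hab | hab
  · obtain rfl : a = 0 := by linarith
    simp
  · rw [Real.sq_sqrt (mul_nonneg ha hb)]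
    field_simp

lemma sum_sqrt_mul_sq_le_sum_harmonicMean_mul_sum_arithMean {ι : Type*} (s : Finset ι)
    {x y : ι → ℝ} (hx : ∀ i, 0 ≤ x i) (hy : ∀ i, 0 ≤ y i) :
    (∑ i ∈ s, √(x i * y i)) ^ 2 ≤
      (∑ i ∈ s, 2 * x i * y i / (x i + y i)) * ∑ i ∈ s, (x i + y i) / 2 :=
  sum_sq_le_sum_mul_sum_of_sq_le_mul s
    (fun i _ => div_nonneg (by have := hx i; have := hy i; positivity) (add_nonneg (hx i) (hy i)))
    (fun i _ => div_nonneg (add_nonneg (hx i) (hy i)) zero_le_two)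
    (fun i _ => (sq_sqrt_mul_eq_harmonicMean_mul_arithMean (hx i) (hy i)).le)

theorem chi_square_ge_rho_one_general (D : ℕ) (x y : Fin D → ℝ)
    (hx : ∀ i, 0 ≤ x i) (hy : ∀ i, 0 ≤ y i)
    (hxs : ∑ i, x i = 1) (hys : ∑ i, y i = 1) :
    (∑ i, Real.sqrt (x i * y i)) ^ 2 ≤ ∑ i, 2 * x i * y i / (x i + y i) := by
  have hmean : ∑ i, (x i + y i) / 2 = 1 := by
    rw [← sum_div, sum_add_distrib, hxs, hys]
    norm_num
  simpa [hmean] using sum_sqrt_mul_sq_le_sum_harmonicMean_mul_sum_arithMean univ hx hy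

/-- For probability vectors `x y : ℝ^D` (nonnegative coordinates with unit sums),
the chi-square similarity `ρ_{χ²}(x, y) = ∑ i, 2·x_i·y_i/(x_i + y_i)` is at least
`ρ_1(x, y) = (∑ i, √(x_i·y_i))²`.
(Terms with vanishing denominator are `0`, by Lean's `0/0 = 0` convention.) -/
theorem chi_square_ge_rho_one (D : ℕ) (hD : 1 ≤ D) (x y : Fin D → ℝ)
    (hx : ∀ i, 0 ≤ x i) (hy : ∀ i, 0 ≤ y i)
    (hxs : ∑ i, x i = 1) (hys : ∑ i, y i = 1) :
    (∑ i, Real.sqrt (x i * y i)) ^ 2 ≤ ∑ i, 2 * x i * y i / (x i + y i) :=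
  chi_square_ge_rho_one_general D x y hx hy hxs hys
end

section
/- Let D ≥ 1 and let x, y ∈ ℝ^D satisfy x_i ≥ 0 and y_i ≥ 0 for all 1 ≤ i ≤ D, together with ∑_{i=1}^D x_i = 1 and ∑_{i=1}^D y_i = 1. Then (1/π)·arccos(ρ_{χ²}(x, y)) ≤ (1/π)·arccos(ρ_1(x, y)), where ρ_{χ²}(x, y) := ∑_{i=1}^D 2·x_i·y_i/(x_i + y_i) and ρ_1(x, y) := (∑_{i=1}^D √(x_i·y_i))². -/
open Real

/-- For probability vectors `x y : ℝ^D` (nonnegative coordinates with unit sums),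
`(1/π)·arccos(ρ_{χ²}(x, y)) ≤ (1/π)·arccos(ρ_1(x, y))`, where
`ρ_{χ²}(x, y) = ∑ i, 2·x_i·y_i/(x_i + y_i)` and `ρ_1(x, y) = (∑ i, √(x_i·y_i))²`.
(Terms with vanishing denominator are `0`, by Lean's `0/0 = 0` convention.) -/
theorem arccos_chi_square_le_arccos_rho_one (D : ℕ) (hD : 1 ≤ D) (x y : Fin D → ℝ)
    (hx : ∀ i, 0 ≤ x i) (hy : ∀ i, 0 ≤ y i)
    (hxs : ∑ i, x i = 1) (hys : ∑ i, y i = 1) :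
    (1 / π) * arccos (∑ i, 2 * x i * y i / (x i + y i)) ≤
      (1 / π) * arccos ((∑ i, Real.sqrt (x i * y i)) ^ 2) := by
  have hπ : (0:ℝ) ≤ 1 / π := by positivity
  refine mul_le_mul_of_nonneg_left ?_ hπ
  have hle : (∑ i, Real.sqrt (x i * y i)) ^ 2 ≤ ∑ i, 2 * x i * y i / (x i + y i) := ?_
  · simp only [Real.arccos_eq_pi_div_two_sub_arcsin]
    linarith [Real.monotone_arcsin hle]
  -- Cauchy–Schwarz: √(x_i y_i) = √(2x_iy_i/(x_i+y_i)) · √((x_i+y_i)/2)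
  have key := Finset.sum_mul_sq_le_sq_mul_sq Finset.univ
      (fun i => Real.sqrt (2 * x i * y i / (x i + y i)))
      (fun i => Real.sqrt ((x i + y i) / 2))
  have h1 : ∀ i : Fin D, Real.sqrt (2 * x i * y i / (x i + y i)) *
      Real.sqrt ((x i + y i) / 2) = Real.sqrt (x i * y i) := by
    intro i
    rw [← Real.sqrt_mul (div_nonneg (by nlinarith [hx i, hy i]) (add_nonneg (hx i) (hy i)))]
    congr 1
    rcases eq_or_lt_of_le (add_nonneg (hx i) (hy i)) with h | h
    · have hx0 : x i = 0 := by linarith [hx i, hy i]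
      simp [hx0]
    · field_simp
  have h2 : ∀ i : Fin D, Real.sqrt (2 * x i * y i / (x i + y i)) ^ 2 =
      2 * x i * y i / (x i + y i) := fun i => Real.sq_sqrt (div_nonneg (by nlinarith [hx i, hy i]) (add_nonneg (hx i) (hy i)))
  have h3 : ∀ i : Fin D, Real.sqrt ((x i + y i) / 2) ^ 2 = (x i + y i) / 2 :=
    fun i => Real.sq_sqrt (by linarith [hx i, hy i])
  simp only [h1, h2, h3] at key
  have hsum : ∑ i : Fin D, (x i + y i) / 2 = 1 := by
    rw [← Finset.sum_div, Finset.sum_add_distrib, hxs, hys]; norm_num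
  rw [hsum, mul_one] at key
  exact key
end
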